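/- Let R be a Noetherian ring, I an ideal, M a finitely generated R-module, f ∈ I^s \\ I^{s+1}. If f is superficial for M with respect to I (i.e., there is n₀ such that for all n ≥ n₀ the multiplication map by the initial form f̄ from I^{n-s}M/I^{n-s+1}M to I^nM/I^{n+1}M is injective), then for all sufficiently large n one has the equality of submodules of I^nM: (I^n M ∩ f M) + I^{n+1} M = f • I^{n-s} M + I^{n+1} M. -/

import Mathlib

/-!
By Artin–Rees, `I^N M ∩ fM ⊆ f · I^{N-c} M` for a fixed `c` and all large `N`. For `N = n + s`,
an element `f m` of the left side thus has `m ∈ I^{n+s-c} M`, and superficiality lifts `m`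
one `I`-adic degree at a time until `m ∈ I^n M`. So even `I^{n+s} M ∩ fM = f · I^n M`
for all large `n`.
-/

open Submodule

section GradedInfra

variable {R : Type*} [CommRing R] (I : Ideal R) (M : Type*) [AddCommGroup M] [Module R M]

/-- The `n`-th graded piece `I^n M / I^{n+1} M` of the associated graded module `G_I(M)`. -/
noncomputable abbrev gradedPiece (n : ℕ) : Type _ :=
  ↥(I ^ n • (⊤ : Submodule R M)) ⧸
    (Submodule.comap (I ^ n • (⊤ : Submodule R M)).subtype (I ^ (n + 1) • (⊤ : Submodule R M)))

/-- `f` is superficial of degree `s` for `M` with respect to `I`: for all large `n`,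
multiplication by the initial form of `f` is injective `G_I(M)_n → G_I(M)_{n+s}`. -/
def IsSuperficial (f : R) (s : ℕ) : Prop :=
  ∃ n₀ : ℕ, ∀ n ≥ n₀, ∀ x ∈ (I ^ n • (⊤ : Submodule R M)),
    f • x ∈ (I ^ (n + s + 1) • (⊤ : Submodule R M)) → x ∈ I ^ (n + 1) • (⊤ : Submodule R M)

variable {I M} in
theorem smul_mem_pow_smul {f : R} {s : ℕ} (hf : f ∈ I ^ s) {n : ℕ} {x : M}
    (hx : x ∈ I ^ n • (⊤ : Submodule R M)) : f • x ∈ I ^ (n + s) • (⊤ : Submodule R M) := by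
  have h1 : f • x ∈ I ^ s • (I ^ n • (⊤ : Submodule R M)) := Submodule.smul_mem_smul hf hx
  rwa [← mul_smul, ← pow_add, add_comm s n] at h1

/-- Multiplication by the initial form of `f ∈ I^s`, as a map of graded pieces
`G_I(M)_n → G_I(M)_{n+s}`. -/
noncomputable def gradedMulMap {f : R} {s : ℕ} (hf : f ∈ I ^ s) (n : ℕ) :
    gradedPiece I M n →ₗ[R] gradedPiece I M (n + s) :=
  Submodule.mapQ _ _
    ((LinearMap.lsmul R M f).restrict (p := I ^ n • ⊤) (q := I ^ (n + s) • ⊤)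
      (fun _ hx => smul_mem_pow_smul hf hx))
    (fun _ hx => by
      have h2 := smul_mem_pow_smul (n := n + 1) hf hx
      rwa [show n + 1 + s = n + s + 1 by omega] at h2)

variable {I M} in
theorem mkQ_mem_pow_smul (N : Submodule R M) {n : ℕ} {x : M}
    (hx : x ∈ I ^ n • (⊤ : Submodule R M)) :
    N.mkQ x ∈ I ^ n • (⊤ : Submodule R (M ⧸ N)) := by
  have h : Submodule.map N.mkQ (I ^ n • (⊤ : Submodule R M))
      = I ^ n • (⊤ : Submodule R (M ⧸ N)) := by
    rw [Submodule.map_smul'', Submodule.map_top, Submodule.range_mkQ]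
  exact h ▸ Submodule.mem_map_of_mem hx

/-- The map `I^n M → G_I(M/N)_n` induced by the quotient map `M → M/N`. -/
noncomputable def toGradedQuot (N : Submodule R M) (n : ℕ) :
    ↥(I ^ n • (⊤ : Submodule R M)) →ₗ[R] gradedPiece I (M ⧸ N) n :=
  (Submodule.comap (I ^ n • (⊤ : Submodule R (M ⧸ N))).subtype
      (I ^ (n + 1) • (⊤ : Submodule R (M ⧸ N)))).mkQ.comp
    (N.mkQ.restrict (p := I ^ n • ⊤) (q := I ^ n • ⊤) (fun _ hx => mkQ_mem_pow_smul N hx))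

/-- The map of graded pieces `G_I(M)_n → G_I(M/N)_n` induced by the quotient `M → M/N`. -/
noncomputable def gradedQuotMap (N : Submodule R M) (n : ℕ) :
    gradedPiece I M n →ₗ[R] gradedPiece I (M ⧸ N) n :=
  Submodule.liftQ _ (toGradedQuot I M N n)
    (fun x hx => by
      have h : N.mkQ x.1 ∈ I ^ (n + 1) • (⊤ : Submodule R (M ⧸ N)) := mkQ_mem_pow_smul N hx
      exact (Submodule.Quotient.mk_eq_zero _).mpr h)

end GradedInfra

section

variable {R M : Type*} [CommRing R] [AddCommGroup M] [Module R M]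

theorem Ideal.exists_pow_smul_top_inf_le [IsNoetherianRing R] [Module.Finite R M]
    (I J : Ideal R) :
    ∃ c : ℕ, ∀ n ≥ c, I ^ n • (⊤ : Submodule R M) ⊓ J • ⊤ ≤ J • I ^ (n - c) • ⊤ := by
  obtain ⟨c, hc⟩ := I.exists_pow_inf_eq_pow_smul (J • (⊤ : Submodule R M))
  refine ⟨c, fun n hn => ?_⟩
  calc I ^ n • (⊤ : Submodule R M) ⊓ J • ⊤
      = I ^ (n - c) • (I ^ c • ⊤ ⊓ J • ⊤) := hc n hn
    _ ≤ I ^ (n - c) • J • ⊤ := smul_mono_right _ inf_le_right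
    _ = J • I ^ (n - c) • ⊤ := by rw [smul_smul, mul_comm, ← smul_smul]

theorem IsSuperficial.exists_mem_pow_smul_of_smul_mem {I : Ideal R} {f : R} {s : ℕ}
    (hsup : IsSuperficial I M f s) :
    ∃ j₀ : ℕ, ∀ j ≥ j₀, ∀ n : ℕ, ∀ m ∈ I ^ j • (⊤ : Submodule R M),
      f • m ∈ I ^ (n + s) • (⊤ : Submodule R M) → m ∈ I ^ n • (⊤ : Submodule R M) := by
  obtain ⟨j₀, hj₀⟩ := hsup
  refine ⟨j₀, fun j hj n => ?_⟩
  induction n with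
  | zero => simp
  | succ n ih =>
    intro m hm hfm
    have hmn : m ∈ I ^ n • (⊤ : Submodule R M) :=
      ih m hm (smul_mono_left (Ideal.pow_le_pow_right (by omega)) hfm)
    by_cases hnj : n + 1 ≤ j
    · exact smul_mono_left (Ideal.pow_le_pow_right hnj) hm
    · exact hj₀ n (by omega) m hmn (by rwa [show n + 1 + s = n + s + 1 by omega] at hfm)

theorem IsSuperficial.exists_pow_smul_top_inf_span_singleton_eq [IsNoetherianRing R]
    [Module.Finite R M] {I : Ideal R} {f : R} {s : ℕ} (hf : f ∈ I ^ s)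
    (hsup : IsSuperficial I M f s) :
    ∃ n₀ : ℕ, ∀ n ≥ n₀, I ^ (n + s) • (⊤ : Submodule R M) ⊓ Ideal.span {f} • ⊤ =
      Ideal.span {f} • I ^ n • ⊤ := by
  obtain ⟨j₀, hj₀⟩ := hsup.exists_mem_pow_smul_of_smul_mem
  obtain ⟨c, hc⟩ := I.exists_pow_smul_top_inf_le (M := M) (Ideal.span {f})
  refine ⟨j₀ + c, fun n hn => le_antisymm (fun x hx => ?_) ?_⟩
  · have hx' := hc (n + s) (by omega) hx
    rw [ideal_span_singleton_smul, mem_smul_pointwise_iff_exists] at hx'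
    obtain ⟨m, hm, rfl⟩ := hx'
    rw [ideal_span_singleton_smul]
    exact smul_mem_pointwise_smul _ _ _ (hj₀ _ (by omega) n m hm hx.1)
  · refine le_inf (smul_le.mpr fun r hr m hm => ?_) (smul_mono_right _ le_top)
    obtain ⟨t, rfl⟩ := Ideal.mem_span_singleton'.mp hr
    rw [mul_comm, mul_smul]
    exact smul_mem_pow_smul hf (smul_mem _ t hm)

end

theorem stmt_7_general {R M : Type*} [CommRing R] [IsNoetherianRing R] [AddCommGroup M] [Module R M]
    [Module.Finite R M] (I : Ideal R) (f : R) (s : ℕ) (hf : f ∈ I ^ s)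
    (hsup : IsSuperficial I M f s) :
    ∃ n₀ : ℕ, ∀ n ≥ n₀,
      ((I ^ (n + s) • (⊤ : Submodule R M)) ⊓ (Ideal.span {f} • (⊤ : Submodule R M))) ⊔
          I ^ (n + s + 1) • (⊤ : Submodule R M) =
        (Ideal.span {f} • (I ^ n • (⊤ : Submodule R M))) ⊔
          I ^ (n + s + 1) • (⊤ : Submodule R M) := by
  obtain ⟨n₀, hn₀⟩ := hsup.exists_pow_smul_top_inf_span_singleton_eq hf
  exact ⟨n₀, fun n hn => by rw [hn₀ n hn]⟩

/-- If `f ∈ I^s \ I^{s+1}` is superficial for `M` w.r.t. `I`, then for all large `n`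
(writing the degree as `n + s`): `(I^{n+s}M ∩ fM) + I^{n+s+1}M = f·I^nM + I^{n+s+1}M`. -/
theorem stmt_7 {R M : Type*} [CommRing R] [IsNoetherianRing R] [AddCommGroup M] [Module R M]
    [Module.Finite R M] (I : Ideal R) (f : R) (s : ℕ) (hf : f ∈ I ^ s) (hf' : f ∉ I ^ (s + 1))
    (hsup : IsSuperficial I M f s) :
    ∃ n₀ : ℕ, ∀ n ≥ n₀,
      ((I ^ (n + s) • (⊤ : Submodule R M)) ⊓ (Ideal.span {f} • (⊤ : Submodule R M))) ⊔
          I ^ (n + s + 1) • (⊤ : Submodule R M) =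
        (Ideal.span {f} • (I ^ n • (⊤ : Submodule R M))) ⊔
          I ^ (n + s + 1) • (⊤ : Submodule R M) :=
  stmt_7_general I f s hf hsup
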